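/- Let a > 0 and 0 < z < 1, let L be the Meixner moment functional L[f] = Σ_{x=0}^{∞} f(x)·(a)_x z^x / x!, and let (P_n)_{n≥0} be a monic orthogonal polynomial sequence for L with recurrence coefficients β_n, γ_n. Then for all n ≥ 0 the structure relation x·P_n(x−1) = z γ_n P_{n−1}(x) + (1−z)(γ_{n+1} − γ_n) P_n(x) + P_{n+1}(x) holds as an identity of polynomials (with P_{−1} = 0, γ_0 = 0). -/

import Mathlib

/-!
Shifting the summation index turns the weight relation `(x + 1) w(x + 1) = z (a + x) w(x)` into
the Pearson identity `L[x p(x - 1)] = z L[(x + a) p(x)]`. Hence `Q_n(x) = x P_n(x - 1)`, monic of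
degree `n + 1`, satisfies `L[Q_n P_k] = z L[(x + a) P_k(x + 1) P_n]`, which vanishes for
`k + 1 < n` and equals `z h_n` for `k + 1 = n`. Writing `Q_n = x P_n - x (P_n - P_n(x - 1))`, where
the difference has degree `n - 1` and leading coefficient `n`, gives `L[Q_n P_n] = (β_n - n) h_n`.
Moreover `Q` obeys the shifted recurrence `Q_{n+1} = (x - 1 - β_n) Q_n - γ_n Q_{n-1}`; pairing it
with `P_n` gives `(1 - z) (γ_{n+1} - γ_n) = β_n - n`. Both sides of the structure relation then
have the same pairings with `P_0, …, P_{n+1}`, which determine a polynomial of degree `≤ n + 1`.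
-/

open Polynomial Filter Topology

namespace Polynomial

variable {R : Type*} [CommRing R]

theorem coeff_comp_X_add_C_of_natDegree_le (p : R[X]) (r : R) (n : ℕ)
    (hp : p.natDegree ≤ n + 1) :
    (p.comp (X + C r)).coeff n = p.coeff n + (n + 1) * r * p.coeff (n + 1) := by
  have hasse : hasseDeriv n p = C (p.coeff n) + C ((n + 1) * p.coeff (n + 1)) * X := by
    ext k
    rw [hasseDeriv_coeff]
    match k with
    | 0 => simp
    | 1 => simp [Nat.choose_succ_self_right, add_comm 1 n]
    | k + 2 =>
      simp [coeff_eq_zero_of_natDegree_lt (show p.natDegree < k + 2 + n by omega), coeff_one]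
  rw [← taylor_apply, taylor_coeff, hasse]
  simp
  ring

theorem comp_X_sub_one_eq_taylor (p : R[X]) : p.comp (X - 1) = taylor (-1) p := by
  rw [taylor_apply, C_neg, C_1, sub_eq_add_neg]

theorem coeff_sub_comp_X_sub_one (p : R[X]) (n : ℕ) (hp : p.natDegree ≤ n + 1) :
    (p - p.comp (X - 1)).coeff n = (n + 1) * p.coeff (n + 1) := by
  rw [coeff_sub, comp_X_sub_one_eq_taylor, taylor_apply,
    coeff_comp_X_add_C_of_natDegree_le p (-1) n hp]
  ring

theorem degree_sub_comp_X_sub_one_lt {p : R[X]} (hp : p ≠ 0) :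
    (p - p.comp (X - 1)).degree < p.degree := by
  rw [comp_X_sub_one_eq_taylor]
  exact degree_sub_lt_left (degree_taylor p _).symm hp (leadingCoeff_taylor _ _).symm

theorem Monic.mul_taylor [Nontrivial R] {p q : R[X]} (hq : q.Monic) (hp : p.Monic) (r : R) :
    (q * taylor r p).Monic ∧ (q * taylor r p).natDegree = q.natDegree + p.natDegree := by
  have hpr : (taylor r p).Monic := by rw [taylor_apply]; exact hp.comp_X_add_C r
  exact ⟨hq.mul hpr, by rw [hq.natDegree_mul hpr, natDegree_taylor]⟩

end Polynomial

theorem LinearMap.map_C_mul {R : Type*} [CommSemiring R] (L : R[X] →ₗ[R] R) (c : R)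
    (p : R[X]) : L (C c * p) = c * L p := by
  rw [C_mul', map_smul, smul_eq_mul]

section Recurrence

variable {K : Type*} [Field K] {P : ℕ → K[X]} {β γ : ℕ → K}

theorem map_mul_X_mul_of_recurrence (L : K[X] →ₗ[K] K)
    (hrec : ∀ n, X * P n = P (n + 1) + C (β n) * P n + C (γ n) * P (n - 1))
    (q : K[X]) (n : ℕ) :
    L (q * (X * P n)) = L (q * P (n + 1)) + β n * L (q * P n) + γ n * L (q * P (n - 1)) := by
  rw [hrec n, mul_add, mul_add, map_add, map_add, mul_left_comm, LinearMap.map_C_mul,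
    mul_left_comm, LinearMap.map_C_mul]

theorem X_mul_comp_X_sub_one_recurrence
    (hrec : ∀ n, X * P n = P (n + 1) + C (β n) * P n + C (γ n) * P (n - 1)) (n : ℕ) :
    X * (P (n + 1)).comp (X - 1) = (X - C (1 + β n)) * (X * (P n).comp (X - 1))
      - C (γ n) * (X * (P (n - 1)).comp (X - 1)) := by
  have e := congrArg (·.comp (X - 1)) (hrec n)
  simp only [mul_comp, add_comp, X_comp, C_comp] at e
  rw [C_add, C_1]
  linear_combination (-X) * e

end Recurrence

theorem map_X_mul_comp_mul_of_pearson {K : Type*} [Field K] {L : K[X] →ₗ[K] K} {a z : K}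
    (hL : ∀ p, L (X * p.comp (X - 1)) = z * L ((X + C a) * p)) (p q : K[X]) :
    L (X * p.comp (X - 1) * q) = z * L ((X + C a) * q.comp (X + 1) * p) := by
  have hq : q = (q.comp (X + 1)).comp (X - 1) := by simp [comp_assoc]
  rw [hq, mul_assoc, ← mul_comp, ← hq, hL]
  ring_nf

structure IsMonicOrthogonal {K : Type*} [Field K] (L : K[X] →ₗ[K] K) (P : ℕ → K[X])
    (h : ℕ → K) : Prop where
  monic : ∀ n, (P n).Monic
  natDegree_eq : ∀ n, (P n).natDegree = n
  map_mul : ∀ n m, L (P n * P m) = if n = m then h n else 0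

namespace IsMonicOrthogonal

variable {K : Type*} [Field K] {L : K[X] →ₗ[K] K} {P : ℕ → K[X]} {h : ℕ → K}

theorem coeff_self (hP : IsMonicOrthogonal L P h) (n : ℕ) : (P n).coeff n = 1 := by
  simpa [hP.natDegree_eq] using (hP.monic n).coeff_natDegree

theorem map_mul_eq_zero_of_degree_lt (hP : IsMonicOrthogonal L P h) {m : ℕ} (q : K[X])
    (hq : q.degree < m) : L (q * P m) = 0 := by
  induction q using degree_lt_wf.induction with
  | _ q ih =>
  by_cases hq0 : q = 0
  · simp [hq0]
  have hmon := hP.monic q.natDegree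
  have hlead : (C q.leadingCoeff * P q.natDegree).leadingCoeff = q.leadingCoeff := by
    rw [leadingCoeff_C_mul_of_isUnit (leadingCoeff_ne_zero.mpr hq0).isUnit, hmon.leadingCoeff,
      mul_one]
  have hdeg : q.degree = (C q.leadingCoeff * P q.natDegree).degree := by
    rw [degree_C_mul (leadingCoeff_ne_zero.mpr hq0), degree_eq_natDegree hmon.ne_zero,
      hP.natDegree_eq, degree_eq_natDegree hq0]
  have hlt := degree_sub_lt_left hdeg hq0 hlead.symm
  have hne : q.natDegree ≠ m := by
    intro e
    rw [degree_eq_natDegree hq0, e] at hq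
    exact lt_irrefl _ hq
  calc L (q * P m)
      = L ((q - C q.leadingCoeff * P q.natDegree) * P m)
          + q.leadingCoeff * L (P q.natDegree * P m) := by
        rw [← LinearMap.map_C_mul, ← map_add]; congr 1; ring
    _ = 0 := by rw [ih _ hlt (hlt.trans hq), hP.map_mul, if_neg hne]; ring

theorem map_mul_eq_coeff_mul (hP : IsMonicOrthogonal L P h) {m : ℕ} {q : K[X]}
    (hq : q.natDegree ≤ m) : L (q * P m) = q.coeff m * h m := by
  have hlt : (q - C (q.coeff m) * P m).degree < m := by
    rw [degree_lt_iff_coeff_zero]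
    intro j hj
    rcases (Nat.cast_le.mp hj).eq_or_lt with rfl | hj
    · rw [coeff_sub, coeff_C_mul, hP.coeff_self]; ring
    · rw [coeff_sub, coeff_C_mul, coeff_eq_zero_of_natDegree_lt (hq.trans_lt hj),
        coeff_eq_zero_of_natDegree_lt (p := P m) (by rw [hP.natDegree_eq]; exact hj)]
      ring
  calc L (q * P m)
      = L ((q - C (q.coeff m) * P m) * P m) + q.coeff m * L (P m * P m) := by
        rw [← LinearMap.map_C_mul, ← map_add]; congr 1; ring
    _ = q.coeff m * h m := by
        rw [hP.map_mul_eq_zero_of_degree_lt _ hlt, hP.map_mul, if_pos rfl]; ring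

theorem map_monic_mul (hP : IsMonicOrthogonal L P h) {m : ℕ} {q : K[X]} (hq : q.Monic)
    (hqm : q.natDegree ≤ m) : L (q * P m) = if q.natDegree = m then h m else 0 := by
  rw [hP.map_mul_eq_coeff_mul hqm]
  split_ifs with e
  · rw [← e, hq.coeff_natDegree, one_mul]
  · rw [coeff_eq_zero_of_natDegree_lt (hqm.lt_of_ne e), zero_mul]

theorem eq_of_forall_map_mul_eq (hP : IsMonicOrthogonal L P h) (hh : ∀ n, h n ≠ 0)
    {p q : K[X]} {N : ℕ} (hp : p.natDegree ≤ N) (hq : q.natDegree ≤ N)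
    (hpq : ∀ k ≤ N, L (p * P k) = L (q * P k)) : p = q := by
  rw [← sub_eq_zero]
  by_contra hne
  have hd : (p - q).natDegree ≤ N := (natDegree_sub_le _ _).trans (max_le hp hq)
  have := hP.map_mul_eq_coeff_mul (le_refl (p - q).natDegree)
  rw [sub_mul, map_sub, hpq _ hd, sub_self, coeff_natDegree] at this
  exact mul_ne_zero (leadingCoeff_ne_zero.mpr hne) (hh _) this.symm

theorem monic_X_mul_comp_X_sub_one (hP : IsMonicOrthogonal L P h) (n : ℕ) :
    (X * (P n).comp (X - 1)).Monic ∧ (X * (P n).comp (X - 1)).natDegree = n + 1 := by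
  rw [comp_X_sub_one_eq_taylor]
  obtain ⟨hmon, hdeg⟩ := monic_X.mul_taylor (hP.monic n) (-1)
  exact ⟨hmon, by rw [hdeg, natDegree_X, hP.natDegree_eq, add_comm]⟩

variable {a z : K} {β γ : ℕ → K}

theorem h_succ (hP : IsMonicOrthogonal L P h)
    (hrec : ∀ n, X * P n = P (n + 1) + C (β n) * P n + C (γ n) * P (n - 1)) (n : ℕ) :
    h (n + 1) = γ (n + 1) * h n := by
  have e := map_mul_X_mul_of_recurrence L hrec (P (n + 1)) n
  rw [show P (n + 1) * (X * P n) = P n * (X * P (n + 1)) by ring,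
    map_mul_X_mul_of_recurrence L hrec] at e
  simp only [hP.map_mul, Nat.add_sub_cancel] at e
  simpa [show n + 1 ≠ n - 1 by omega, show n ≠ n + 1 + 1 by omega] using e.symm

theorem map_X_mul_mul_self (hP : IsMonicOrthogonal L P h) (hγ0 : γ 0 = 0)
    (hrec : ∀ n, X * P n = P (n + 1) + C (β n) * P n + C (γ n) * P (n - 1)) (n : ℕ) :
    L (X * P n * P n) = β n * h n := by
  rw [mul_comm, map_mul_X_mul_of_recurrence L hrec]
  rcases n with _ | m
  · simp [hP.map_mul, hγ0]
  · simp [hP.map_mul]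

theorem map_X_mul_comp_mul_succ (hP : IsMonicOrthogonal L P h) (n : ℕ) :
    L (X * (P n).comp (X - 1) * P (n + 1)) = h (n + 1) := by
  obtain ⟨hmon, hdeg⟩ := hP.monic_X_mul_comp_X_sub_one n
  rw [hP.map_monic_mul hmon hdeg.le, if_pos hdeg]

theorem map_X_mul_comp_mul_of_succ_le (hP : IsMonicOrthogonal L P h)
    (hL : ∀ p, L (X * p.comp (X - 1)) = z * L ((X + C a) * p)) {k n : ℕ} (hkn : k + 1 ≤ n) :
    L (X * (P n).comp (X - 1) * P k) = if k + 1 = n then z * h n else 0 := by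
  have hq := (monic_X_add_C a).mul_taylor (hP.monic k) 1
  rw [taylor_apply, C_1, natDegree_X_add_C, hP.natDegree_eq, add_comm 1] at hq
  rw [map_X_mul_comp_mul_of_pearson hL, hP.map_monic_mul hq.1 (hq.2.trans_le hkn), hq.2]
  split_ifs <;> ring

theorem map_X_mul_comp_mul_self (hP : IsMonicOrthogonal L P h) (hγ0 : γ 0 = 0)
    (hrec : ∀ n, X * P n = P (n + 1) + C (β n) * P n + C (γ n) * P (n - 1)) (n : ℕ) :
    L (X * (P n).comp (X - 1) * P n) = (β n - n) * h n := by
  set D := P n - (P n).comp (X - 1)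
  have hD : D.degree < n := by
    simpa [degree_eq_natDegree (hP.monic n).ne_zero, hP.natDegree_eq] using
      degree_sub_comp_X_sub_one_lt (hP.monic n).ne_zero
  have hDlow : γ n * L (D * P (n - 1)) = n * h n := by
    rcases n with _ | m
    · simp [hγ0]
    · have hDm : D.natDegree ≤ m := natDegree_le_iff_coeff_eq_zero.mpr fun j hj =>
        (degree_lt_iff_coeff_zero _ _).mp hD j hj
      rw [Nat.add_sub_cancel, hP.map_mul_eq_coeff_mul hDm,
        coeff_sub_comp_X_sub_one _ _ (hP.natDegree_eq _).le, hP.coeff_self, hP.h_succ hrec]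
      push_cast
      ring
  rw [show X * (P n).comp (X - 1) * P n = X * P n * P n - D * (X * P n) by ring, map_sub,
    hP.map_X_mul_mul_self hγ0 hrec, map_mul_X_mul_of_recurrence L hrec,
    hP.map_mul_eq_zero_of_degree_lt _ (hD.trans (by exact_mod_cast n.lt_succ_self)),
    hP.map_mul_eq_zero_of_degree_lt _ hD, hDlow]
  ring

theorem one_sub_mul_γ_succ_sub_γ (hP : IsMonicOrthogonal L P h) (hh : ∀ n, h n ≠ 0)
    (hL : ∀ p, L (X * p.comp (X - 1)) = z * L ((X + C a) * p)) (hγ0 : γ 0 = 0)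
    (hrec : ∀ n, X * P n = P (n + 1) + C (β n) * P n + C (γ n) * P (n - 1)) (n : ℕ) :
    (1 - z) * (γ (n + 1) - γ n) = β n - n := by
  have hlow : γ n * (L (X * (P n).comp (X - 1) * P (n - 1))
      - L (X * (P (n - 1)).comp (X - 1) * P n)) = (z - 1) * γ n * h n := by
    rcases n with _ | m
    · simp [hγ0]
    · rw [Nat.add_sub_cancel, hP.map_X_mul_comp_mul_of_succ_le hL le_rfl, if_pos rfl,
        hP.map_X_mul_comp_mul_succ]
      ring
  have e := congrArg (fun p => L (p * P n)) (X_mul_comp_X_sub_one_recurrence hrec n)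
  rw [hP.map_X_mul_comp_mul_of_succ_le hL le_rfl, if_pos rfl,
    show ((X - C (1 + β n)) * (X * (P n).comp (X - 1))
      - C (γ n) * (X * (P (n - 1)).comp (X - 1))) * P n
      = X * (P n).comp (X - 1) * (X * P n) - C (1 + β n) * (X * (P n).comp (X - 1) * P n)
        - C (γ n) * (X * (P (n - 1)).comp (X - 1) * P n) by ring,
    map_sub, map_sub, map_mul_X_mul_of_recurrence L hrec, LinearMap.map_C_mul,
    LinearMap.map_C_mul, hP.map_X_mul_comp_mul_succ, hP.map_X_mul_comp_mul_self hγ0 hrec,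
    hP.h_succ hrec] at e
  apply mul_right_cancel₀ (hh n)
  linear_combination -e - hlow

theorem structure_relation (hP : IsMonicOrthogonal L P h) (hh : ∀ n, h n ≠ 0)
    (hL : ∀ p, L (X * p.comp (X - 1)) = z * L ((X + C a) * p)) (hγ0 : γ 0 = 0)
    (hrec : ∀ n, X * P n = P (n + 1) + C (β n) * P n + C (γ n) * P (n - 1)) (n : ℕ) :
    X * (P n).comp (X - 1) =
      C (z * γ n) * P (n - 1) + C ((1 - z) * (γ (n + 1) - γ n)) * P n + P (n + 1) := by
  rw [hP.one_sub_mul_γ_succ_sub_γ hh hL hγ0 hrec n]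
  have hle : ∀ j ≤ n + 1, ∀ c, (C c * P j).natDegree ≤ n + 1 := fun j hj c =>
    (natDegree_C_mul_le _ _).trans ((hP.natDegree_eq j).trans_le hj)
  refine hP.eq_of_forall_map_mul_eq hh (hP.monic_X_mul_comp_X_sub_one n).2.le
    (natDegree_add_le_of_degree_le (natDegree_add_le_of_degree_le (hle _ (by omega) _)
      (hle _ (by omega) _)) (hP.natDegree_eq _).le) fun k hk => ?_
  simp only [add_mul, mul_assoc (C _), map_add, LinearMap.map_C_mul, hP.map_mul]
  obtain rfl | rfl | rfl | hlt : k = n + 1 ∨ k = n ∨ k + 1 = n ∨ k + 1 < n := by omega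
  · simp [hP.map_X_mul_comp_mul_succ, show n - 1 ≠ n + 1 by omega]
  · rw [hP.map_X_mul_comp_mul_self hγ0 hrec]
    rcases k with _ | m
    · simp [hγ0]
    · simp
  · rw [hP.map_X_mul_comp_mul_of_succ_le hL le_rfl, hP.h_succ hrec]
    simp [show k + 1 + 1 ≠ k by omega, mul_assoc]
  · rw [hP.map_X_mul_comp_mul_of_succ_le hL hlt.le, if_neg hlt.ne]
    simp [show n - 1 ≠ k by omega, show n ≠ k by omega, show n + 1 ≠ k by omega]

end IsMonicOrthogonal

noncomputable def discreteMomentFunctional (w : ℕ → ℝ)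
    (hw : ∀ p : ℝ[X], Summable fun x : ℕ => p.eval (x : ℝ) * w x) :
    ℝ[X] →ₗ[ℝ] ℝ where
  toFun p := ∑' x : ℕ, p.eval (x : ℝ) * w x
  map_add' p q := by
    simp only [eval_add, add_mul]
    exact (hw p).tsum_add (hw q)
  map_smul' c p := by
    simp only [eval_smul, smul_eq_mul, mul_assoc, RingHom.id_apply]
    exact tsum_mul_left

section DiscreteMoment

variable {w : ℕ → ℝ}

theorem summable_add_one_pow_mul {a z : ℝ} (hz : z < 1) (hpos : ∀ x, 0 < w x)
    (hrat : ∀ x : ℕ, ((x : ℝ) + 1) * w (x + 1) = z * (a + x) * w x) (d : ℕ) :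
    Summable fun x : ℕ => ((x : ℝ) + 1) ^ d * w x := by
  have hf : ∀ x : ℕ, 0 < ((x : ℝ) + 1) ^ d * w x := fun x => by
    have := hpos x
    positivity
  refine summable_of_ratio_test_tendsto_lt_one hz (.of_forall fun n => (hf n).ne') ?_
  have t : Tendsto (fun n : ℕ => 1 / ((n : ℝ) + 1)) atTop (𝓝 0) :=
    tendsto_one_div_add_atTop_nhds_zero_nat
  -- the ratio of consecutive terms is `((n + 2) / (n + 1)) ^ d * z (a + n) / (n + 1)`
  have hlim : Tendsto
      (fun n : ℕ => (1 + 1 / ((n : ℝ) + 1)) ^ d * (z * (1 + (a - 1) * (1 / ((n : ℝ) + 1)))))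
      atTop (𝓝 ((1 + 0) ^ d * (z * (1 + (a - 1) * 0)))) :=
    ((tendsto_const_nhds.add t).pow d).mul
      (tendsto_const_nhds.mul (tendsto_const_nhds.add (tendsto_const_nhds.mul t)))
  simp only [add_zero, mul_zero, one_pow, one_mul, mul_one] at hlim
  refine hlim.congr fun n => ?_
  have hw1 : w (n + 1) = z * (a + n) * w n / (n + 1) := by
    rw [← hrat n]
    field_simp
  have := hpos n
  rw [Real.norm_of_nonneg (hf _).le, Real.norm_of_nonneg (hf _).le, hw1,
    show (1 : ℝ) + 1 / (n + 1) = (n + 1 + 1) / (n + 1) by field_simp, div_pow]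
  push_cast
  field_simp
  ring

theorem summable_eval_mul (hpos : ∀ x, 0 < w x)
    (hsum : ∀ d, Summable fun x : ℕ => ((x : ℝ) + 1) ^ d * w x) (p : ℝ[X]) :
    Summable fun x : ℕ => p.eval (x : ℝ) * w x := by
  simp only [eval_eq_sum_range, Finset.sum_mul, mul_assoc]
  refine summable_sum fun i _ =>
    (Summable.of_nonneg_of_le (fun x => ?_) (fun x => ?_) (hsum i)).mul_left _
  · have := hpos x
    positivity
  · have := hpos x
    gcongr
    linarith

theorem discreteMomentFunctional_pearson
    {hw : ∀ p : ℝ[X], Summable fun x : ℕ => p.eval (x : ℝ) * w x} {a z : ℝ}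
    (hrat : ∀ x : ℕ, ((x : ℝ) + 1) * w (x + 1) = z * (a + x) * w x) (p : ℝ[X]) :
    discreteMomentFunctional w hw (X * p.comp (X - 1)) =
      z * discreteMomentFunctional w hw ((X + C a) * p) := by
  change ∑' x : ℕ, _ = z * ∑' x : ℕ, _
  rw [(hw _).tsum_eq_zero_add, ← tsum_mul_left]
  simp only [eval_mul, eval_X, eval_comp, eval_sub, eval_one, eval_add, eval_C, Nat.cast_zero,
    zero_mul, zero_add, Nat.cast_add, Nat.cast_one, add_sub_cancel_right]
  congr 1
  ext x
  linear_combination (eval (x : ℝ) p) * hrat x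

end DiscreteMoment

/-- structure relation for the Meixner polynomials:
x·Pₙ(x−1) = zγₙ P_{n−1}(x) + (1−z)(γ_{n+1} − γₙ) Pₙ(x) + P_{n+1}(x). -/
theorem meixner_structure_relation_backward
    (a z : ℝ) (ha : 0 < a) (hz0 : 0 < z) (hz1 : z < 1)
    (w : ℕ → ℝ)
    (hw : ∀ x : ℕ, w x = (ascPochhammer ℝ x).eval a * z ^ x / x.factorial)
    (P : ℕ → Polynomial ℝ) (h : ℕ → ℝ)
    (hmonic : ∀ n, (P n).Monic) (hdeg : ∀ n, (P n).natDegree = n)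
    (hh : ∀ n, h n ≠ 0)
    (horth : ∀ n m : ℕ,
      (∑' x : ℕ, (P n * P m).eval (x : ℝ) * w x) = if n = m then h n else 0)
    (β γ : ℕ → ℝ) (hγ0 : γ 0 = 0)
    (hrec : ∀ n : ℕ, X * P n = P (n + 1) + C (β n) * P n + C (γ n) * P (n - 1)) :
    ∀ n : ℕ,
      X * (P n).comp (X - 1) =
        C (z * γ n) * P (n - 1) + C ((1 - z) * (γ (n + 1) - γ n)) * P n
          + P (n + 1) := by
  have hpos : ∀ x, 0 < w x := fun x => by
    have := ascPochhammer_pos x a ha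
    rw [hw]
    positivity
  have hrat : ∀ x : ℕ, ((x : ℝ) + 1) * w (x + 1) = z * (a + x) * w x := fun x => by
    rw [hw, hw, ascPochhammer_succ_eval, Nat.factorial_succ]
    push_cast
    field_simp
    ring
  have hsum := summable_eval_mul hpos (summable_add_one_pow_mul hz1 hpos hrat)
  have hP : IsMonicOrthogonal (discreteMomentFunctional w hsum) P h := ⟨hmonic, hdeg, horth⟩
  exact hP.structure_relation hh (discreteMomentFunctional_pearson hrat) hγ0 hrec
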